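/- arXiv:1409.8058 — 2 statements merged into one kernel-verified Lean document; each statement's English description precedes it below -/
import Mathlib

section
/- Under the standing assumptions, the following estimate holds: for every p ∈ Γ, with K ∈ (0,1) chosen for p as in assumption (d), one has p^∞((R̄ℬ)ⁿ f) ≤ Kⁿ · p^∞(f) for every n ∈ ℕ and every f ∈ 𝒳, where p^∞(g) = sup_{t∈[0,t₀]} p(g(t)) and (R̄ℬ f)(t) = ∫₀ᵗ T̄(t−s) B f(s) ds. -/
/-!
For `0 < t ≤ t₀`, `(R̄ℬ f)(t) = ∫₀ᵗ T̄(t-s) B f(s) ds` equals `∫₀^{t₀} T̄(t₀-s) B g(s) ds`, where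
`g` is `f` delayed by `t₀ - t` and continued by `f 0 = 0` to the left. Condition (d) applied to
`g` gives `p((R̄ℬ f)(t)) ≤ K p^∞(g) ≤ K p^∞(f)`, and iterating gives the factor `Kⁿ`.
The two integrals are compared weakly: continuous functionals separate the points of the locally
convex space `X̄` and turn Riemann integrals into real interval integrals, where the
substitution is available.
-/

open Filter Topology Set MeasureTheory

namespace DS

section SemigroupDefs

variable {E : Type*} [AddCommGroup E] [Module ℝ E] [TopologicalSpace E]

/-- `I` is the Riemann integral of `g` over `[a,b]`, defined as the limit of the left Riemann
sums over uniform partitions. -/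
def IsRiemannIntegral (g : ℝ → E) (a b : ℝ) (I : E) : Prop :=
  Tendsto
    (fun n : ℕ => ((b - a) / (n : ℝ)) •
      ∑ k ∈ Finset.range n, g (a + (b - a) * (k : ℝ) / (n : ℝ)))
    atTop (𝓝 I)

/-- `(T t)_{t ≥ 0}` is a `C₀`-semigroup. -/
def IsC0Semigroup (T : ℝ → E →L[ℝ] E) : Prop :=
  T 0 = ContinuousLinearMap.id ℝ E ∧
    (∀ t s : ℝ, 0 ≤ t → 0 ≤ s → T (t + s) = (T t).comp (T s)) ∧
    ∀ x : E, ContinuousOn (fun t : ℝ => T t x) (Ici (0 : ℝ))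

/-- Local equicontinuity of a one-parameter family of operators. -/
def IsLocallyEquicontinuous (T : ℝ → E →L[ℝ] E) : Prop :=
  ∀ t₀ : ℝ, 0 < t₀ → ∀ p : Seminorm ℝ E, Continuous (fun x : E => p x) →
    ∃ q : Seminorm ℝ E, Continuous (fun x : E => q x) ∧
      ∃ M : ℝ, 0 ≤ M ∧ ∀ x : E, ∀ t ∈ Icc (0 : ℝ) t₀, p (T t x) ≤ M * q x

/-- `A`, with domain `domA`, is the infinitesimal generator of the semigroup `T`. -/
def IsGenerator (T : ℝ → E →L[ℝ] E) (domA : Set E) (A : E → E) : Prop :=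
  (∀ x : E, x ∈ domA ↔
      ∃ y : E, Tendsto (fun t : ℝ => t⁻¹ • (T t x - x)) (𝓝[>] 0) (𝓝 y)) ∧
    ∀ x ∈ domA, Tendsto (fun t : ℝ => t⁻¹ • (T t x - x)) (𝓝[>] 0) (𝓝 (A x))

/-- Derivative of a vector-valued function within a set, in a topological vector space. -/
def HasDerivWithinAtLC (f : ℝ → E) (y : E) (s : Set ℝ) (t : ℝ) : Prop :=
  Tendsto (fun u : ℝ => (u - t)⁻¹ • (f u - f t)) (𝓝[s \ {t}] t) (𝓝 y)

/-- Membership in `𝒳 = { f ∈ C([0,t₀],E) : f 0 = 0 }`; functions are given on all of `ℝ`,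
but only their restriction to `[0,t₀]` is relevant. -/
def MemXc (t₀ : ℝ) (f : ℝ → E) : Prop :=
  ContinuousOn f (Icc (0 : ℝ) t₀) ∧ f 0 = 0

/-- `f ∈ D(𝒟)` with `𝒟 f = f'`. -/
def MemDD (t₀ : ℝ) (f f' : ℝ → E) : Prop :=
  MemXc t₀ f ∧ (∀ t ∈ Icc (0 : ℝ) t₀, HasDerivWithinAtLC f (f' t) (Icc (0 : ℝ) t₀) t) ∧
    ContinuousOn f' (Icc (0 : ℝ) t₀) ∧ f' 0 = 0

/-- `f ∈ D(𝒜)` for the operator `𝒜` induced on `𝒳` by `A` with domain `domA`. -/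
def MemDA (t₀ : ℝ) (domA : Set E) (A : E → E) (f : ℝ → E) : Prop :=
  MemXc t₀ f ∧ (∀ t ∈ Icc (0 : ℝ) t₀, f t ∈ domA) ∧
    ContinuousOn (fun t : ℝ => A (f t)) (Icc (0 : ℝ) t₀)

end SemigroupDefs

/-- Sequential completeness of a uniform space. -/
def SeqComplete (E : Type*) [UniformSpace E] : Prop :=
  ∀ u : ℕ → E, CauchySeq u → ∃ x : E, Tendsto u atTop (𝓝 x)

end DS

open DS

namespace DS

section RiemannSums

variable {E : Type*} [NormedAddCommGroup E] [NormedSpace ℝ E] [CompleteSpace E]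

theorem norm_smul_sub_integral_le {g : ℝ → E} {x y C : ℝ} (hxy : x ≤ y)
    (hg : IntervalIntegrable g volume x y) (hC : ∀ s ∈ Ioc x y, ‖g x - g s‖ ≤ C) :
    ‖(y - x) • g x - ∫ s in x..y, g s‖ ≤ C * (y - x) := by
  have h := intervalIntegral.norm_integral_le_of_norm_le_const (f := fun s => g x - g s)
    (by rwa [uIoc_of_le hxy])
  rwa [intervalIntegral.integral_sub intervalIntegrable_const hg,
    intervalIntegral.integral_const, abs_of_nonneg (sub_nonneg.2 hxy)] at h

theorem dist_riemannSum_integral_le {g : ℝ → E} {a b C : ℝ} (hab : a ≤ b) {n : ℕ} (hn : 0 < n)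
    (hg : ContinuousOn g (Icc a b))
    (hC : ∀ s ∈ Icc a b, ∀ s' ∈ Icc a b, dist s s' ≤ (b - a) / n → ‖g s - g s'‖ ≤ C) :
    dist (((b - a) / n) • ∑ k ∈ Finset.range n, g (a + (b - a) * k / n)) (∫ s in a..b, g s) ≤
      C * (b - a) := by
  have hn0 : (0 : ℝ) < n := by exact_mod_cast hn
  set c := b - a with hc_def
  have hc : 0 ≤ c := sub_nonneg.2 hab
  set x : ℕ → ℝ := fun k => a + c * k / n with hx_def
  have hx_step : ∀ k, x (k + 1) - x k = c / n := by
    intro k; simp only [hx_def]; push_cast; ring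
  have hx_mem : ∀ k ≤ n, x k ∈ Icc a b := by
    intro k hk
    have hk : (k : ℝ) ≤ n := by exact_mod_cast hk
    refine ⟨le_add_of_nonneg_right (by positivity), ?_⟩
    calc x k ≤ a + c * n / n := by simp only [hx_def]; gcongr
      _ = b := by field_simp; ring
  have hint : ∀ k < n, IntervalIntegrable g volume (x k) (x (k + 1)) := fun k hk =>
    (hg.mono (uIcc_subset_Icc (hx_mem k hk.le) (hx_mem (k + 1) hk))).intervalIntegrable
  have hsplit : ∫ s in a..b, g s = ∑ k ∈ Finset.range n, ∫ s in x k..x (k + 1), g s := by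
    rw [intervalIntegral.sum_integral_adjacent_intervals hint]
    congr 1 <;> simp [hx_def, hc_def, hn0.ne']
  have hterm : ∀ k ∈ Finset.range n,
      ‖(c / n) • g (x k) - ∫ s in x k..x (k + 1), g s‖ ≤ C * (c / n) := by
    intro k hk
    have hk := Finset.mem_range.1 hk
    rw [← hx_step k]
    refine norm_smul_sub_integral_le (by linarith [hx_step k, div_nonneg hc hn0.le]) (hint k hk)
      fun s hs => hC _ (hx_mem k hk.le) s ⟨(hx_mem k hk.le).1.trans hs.1.le,
        hs.2.trans (hx_mem _ hk).2⟩ ?_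
    rw [Real.dist_eq, abs_sub_comm, abs_of_nonneg (by linarith [hs.1])]
    linarith [hs.2, hx_step k]
  calc dist ((c / n) • ∑ k ∈ Finset.range n, g (x k)) (∫ s in a..b, g s)
      = ‖∑ k ∈ Finset.range n, ((c / n) • g (x k) - ∫ s in x k..x (k + 1), g s)‖ := by
        rw [dist_eq_norm, hsplit, Finset.smul_sum, Finset.sum_sub_distrib]
    _ ≤ ∑ k ∈ Finset.range n, ‖(c / n) • g (x k) - ∫ s in x k..x (k + 1), g s‖ :=
        norm_sum_le _ _
    _ ≤ ∑ _k ∈ Finset.range n, C * (c / n) := Finset.sum_le_sum hterm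
    _ = C * c := by
        rw [Finset.sum_const, Finset.card_range, nsmul_eq_mul]; field_simp

theorem _root_.ContinuousOn.isRiemannIntegral {g : ℝ → E} {a b : ℝ} (hab : a < b)
    (hg : ContinuousOn g (Icc a b)) : IsRiemannIntegral g a b (∫ s in a..b, g s) := by
  have hc : 0 < b - a := sub_pos.2 hab
  rw [IsRiemannIntegral, Metric.tendsto_atTop]
  intro ε hε
  obtain ⟨δ, hδ, hgδ⟩ := Metric.uniformContinuousOn_iff.1
    (isCompact_Icc.uniformContinuousOn_of_continuous hg) (ε / (2 * (b - a))) (by positivity)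
  obtain ⟨N, hN⟩ := exists_nat_gt ((b - a) / δ)
  refine ⟨N + 1, fun n hn => ?_⟩
  have hn' : (N : ℝ) + 1 ≤ n := by exact_mod_cast hn
  have hn0 : (0 : ℝ) < n := by linarith [N.cast_nonneg (α := ℝ)]
  have hmesh : (b - a) / n < δ := by
    rw [div_lt_iff₀ hn0, ← div_lt_iff₀' hδ]; linarith
  calc _ ≤ ε / (2 * (b - a)) * (b - a) :=
        dist_riemannSum_integral_le hab.le (by omega) hg fun s hs s' hs' hss' => by
          rw [← dist_eq_norm]; exact (hgδ s hs s' hs' (hss'.trans_lt hmesh)).le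
    _ = ε / 2 := by field_simp
    _ < ε := half_lt_self hε

theorem IsRiemannIntegral.eq_integral {g : ℝ → E} {a b : ℝ} {I : E} (hab : a < b)
    (hg : ContinuousOn g (Icc a b)) (h : IsRiemannIntegral g a b I) :
    I = ∫ s in a..b, g s :=
  tendsto_nhds_unique h (hg.isRiemannIntegral hab)

end RiemannSums

section WeakIdentification

variable {E : Type*} [AddCommGroup E] [Module ℝ E] [TopologicalSpace E]

theorem IsRiemannIntegral.map {F : Type*} [AddCommGroup F] [Module ℝ F] [TopologicalSpace F]
    {g : ℝ → E} {a b : ℝ} {I : E} (h : IsRiemannIntegral g a b I) (φ : E →L[ℝ] F) :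
    IsRiemannIntegral (fun s => φ (g s)) a b (φ I) :=
  ((φ.continuous.tendsto I).comp h).congr fun n => by
    simp only [Function.comp_apply, map_smul, map_sum]

theorem IsRiemannIntegral.eq_of_integral_dual_eq [SeparatingDual ℝ E] {g₁ g₂ : ℝ → E}
    {a₁ b₁ a₂ b₂ : ℝ} {I₁ I₂ : E} (h₁ : IsRiemannIntegral g₁ a₁ b₁ I₁)
    (h₂ : IsRiemannIntegral g₂ a₂ b₂ I₂) (hab₁ : a₁ < b₁) (hab₂ : a₂ < b₂)
    (hg₁ : ∀ φ : E →L[ℝ] ℝ, ContinuousOn (fun s => φ (g₁ s)) (Icc a₁ b₁))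
    (hg₂ : ∀ φ : E →L[ℝ] ℝ, ContinuousOn (fun s => φ (g₂ s)) (Icc a₂ b₂))
    (heq : ∀ φ : E →L[ℝ] ℝ, ∫ s in a₁..b₁, φ (g₁ s) = ∫ s in a₂..b₂, φ (g₂ s)) :
    I₁ = I₂ := by
  by_contra hne
  obtain ⟨φ, hφ⟩ := SeparatingDual.exists_separating_of_ne (R := ℝ) hne
  refine hφ ?_
  rw [(h₁.map φ).eq_integral hab₁ (hg₁ φ), (h₂.map φ).eq_integral hab₂ (hg₂ φ), heq]

end WeakIdentification

section SemigroupKernel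

variable {E : Type*} [AddCommGroup E] [Module ℝ E] [TopologicalSpace E] [IsTopologicalAddGroup E]

/-- Stated weakly so that local equicontinuity is needed only for the seminorm `|φ ·|`. -/
theorem continuousOn_dual_apply_semigroup_sub {T : ℝ → E →L[ℝ] E}
    (hT : ∀ x, ContinuousOn (fun t => T t x) (Ici 0)) (hloc : IsLocallyEquicontinuous T)
    (φ : E →L[ℝ] ℝ) {v : ℝ → E} {c : ℝ} (hc : 0 ≤ c) (hv : ContinuousOn v (Icc 0 c)) :
    ContinuousOn (fun u => φ (T (c - u) (v u))) (Icc 0 c) := by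
  obtain ⟨q, hq, M, -, hM⟩ := hloc (c + 1) (by linarith)
    ((normSeminorm ℝ ℝ).comp (φ : E →ₗ[ℝ] ℝ)) φ.continuous.norm
  intro u₀ hu₀
  have hsub : ∀ u ∈ Icc 0 c, c - u ∈ Icc 0 (c + 1) := fun u hu =>
    ⟨sub_nonneg.2 hu.2, by linarith [hu.1]⟩
  have hbound : ∀ u ∈ Icc 0 c, ‖φ (T (c - u) (v u)) - φ (T (c - u₀) (v u₀))‖ ≤
      M * q (v u - v u₀) + ‖φ (T (c - u) (v u₀)) - φ (T (c - u₀) (v u₀))‖ := by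
    intro u hu
    calc _ = ‖φ (T (c - u) (v u - v u₀)) + (φ (T (c - u) (v u₀)) - φ (T (c - u₀) (v u₀)))‖ := by
          rw [map_sub, map_sub, sub_add_sub_cancel]
      _ ≤ _ := (norm_add_le _ _).trans (add_le_add_left (hM _ _ (hsub u hu)) _)
  have hlim₁ : Tendsto (fun u => M * q (v u - v u₀)) (𝓝[Icc 0 c] u₀) (𝓝 0) := by
    have h := (hq.comp_continuousOn (hv.sub (continuousOn_const (c := v u₀)))) u₀ hu₀
    simpa using h.tendsto.const_mul M
  have hlim₂ : Tendsto (fun u => ‖φ (T (c - u) (v u₀)) - φ (T (c - u₀) (v u₀))‖)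
      (𝓝[Icc 0 c] u₀) (𝓝 0) := by
    have h : ContinuousWithinAt (fun u => φ (T (c - u) (v u₀))) (Icc 0 c) u₀ :=
      ((φ.continuous.comp_continuousOn (hT (v u₀))) (c - u₀) (hsub u₀ hu₀).1).comp
        (continuous_const.sub continuous_id).continuousWithinAt
        fun u hu => (hsub u hu).1
    simpa using (h.tendsto.sub_const (φ (T (c - u₀) (v u₀)))).norm
  exact tendsto_sub_nhds_zero_iff.1 <| squeeze_zero_norm'
    (eventually_mem_nhdsWithin.mono hbound) (by simpa using hlim₁.add hlim₂)

end SemigroupKernel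

section Delay

variable {E : Type*} [NormedAddCommGroup E] [NormedSpace ℝ E]

theorem integral_eq_of_eq_delay {F G : ℝ → E} {d b : ℝ} (hd : 0 ≤ d) (hdb : d ≤ b)
    (hF : IntervalIntegrable F volume 0 b) (hF0 : ∀ s ∈ Icc 0 d, F s = 0)
    (hFG : ∀ s ∈ Icc d b, F s = G (s - d)) :
    ∫ s in 0..b, F s = ∫ s in 0..(b - d), G s := by
  have hb : 0 ≤ b := hd.trans hdb
  rw [← intervalIntegral.integral_add_adjacent_intervals
      (hF.mono_set (by rw [uIcc_of_le hd, uIcc_of_le hb]; exact Icc_subset_Icc le_rfl hdb))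
      (hF.mono_set (by rw [uIcc_of_le hdb, uIcc_of_le hb]; exact Icc_subset_Icc hd le_rfl)),
    intervalIntegral.integral_congr (g := fun _ => (0 : E)) (by rwa [uIcc_of_le hd]),
    intervalIntegral.integral_zero, zero_add,
    intervalIntegral.integral_congr (g := fun s => G (s - d)) (by rwa [uIcc_of_le hdb]),
    intervalIntegral.integral_comp_sub_right, sub_self]

end Delay

/-- On `𝒳` this is the delay by `d` continued by zero to the left. -/
def shiftRight {E : Type*} (d : ℝ) (f : ℝ → E) (s : ℝ) : E := f (max (s - d) 0)

theorem mapsTo_max_sub_zero_Icc {d b : ℝ} (hd : 0 ≤ d) :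
    MapsTo (fun s => max (s - d) 0) (Icc 0 b) (Icc 0 b) :=
  fun s hs => ⟨le_max_right _ _, max_le (by linarith [hs.2]) (hs.1.trans hs.2)⟩

theorem _root_.ContinuousOn.shiftRight {E : Type*} [TopologicalSpace E] {f : ℝ → E} {d b : ℝ}
    (hf : ContinuousOn f (Icc 0 b)) (hd : 0 ≤ d) : ContinuousOn (shiftRight d f) (Icc 0 b) :=
  hf.comp (by fun_prop) (mapsTo_max_sub_zero_Icc hd)

section Convolution

variable {X E : Type*} [AddCommGroup X] [Module ℝ X] [TopologicalSpace X]
  [AddCommGroup E] [Module ℝ E] [TopologicalSpace E] [IsTopologicalAddGroup E]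
  [SeparatingDual ℝ E] {T : ℝ → E →L[ℝ] E}

/-- The delayed input vanishes on `[0, b - t]` since `f 0 = 0`, and on `[b - t, b]` the delay is
a change of variables. -/
theorem IsRiemannIntegral.eq_of_shiftRight (hT : ∀ x, ContinuousOn (fun t => T t x) (Ici 0))
    (hloc : IsLocallyEquicontinuous T) (B : X →L[ℝ] E) {f : ℝ → X} {t b : ℝ} {x y : E}
    (ht : 0 < t) (htb : t ≤ b) (hf : ContinuousOn f (Icc 0 b)) (hf0 : f 0 = 0)
    (hx : IsRiemannIntegral (fun s => T (b - s) (B (shiftRight (b - t) f s))) 0 b x)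
    (hy : IsRiemannIntegral (fun s => T (t - s) (B (f s))) 0 t y) : x = y := by
  have hd : 0 ≤ b - t := sub_nonneg.2 htb
  have hx_cont (φ : E →L[ℝ] ℝ) :
      ContinuousOn (fun s => φ (T (b - s) (B (shiftRight (b - t) f s)))) (Icc 0 b) :=
    continuousOn_dual_apply_semigroup_sub hT hloc φ (ht.le.trans htb)
      (B.continuous.comp_continuousOn (hf.shiftRight hd))
  have hy_cont (φ : E →L[ℝ] ℝ) : ContinuousOn (fun s => φ (T (t - s) (B (f s)))) (Icc 0 t) :=
    continuousOn_dual_apply_semigroup_sub hT hloc φ ht.le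
      (B.continuous.comp_continuousOn (hf.mono (Icc_subset_Icc le_rfl htb)))
  refine hx.eq_of_integral_dual_eq hy (ht.trans_le htb) ht hx_cont hy_cont fun φ => ?_
  rw [integral_eq_of_eq_delay hd (sub_le_self _ ht.le)
    ((hx_cont φ).intervalIntegrable_of_Icc (ht.le.trans htb)), sub_sub_cancel]
  · intro s hs
    simp [shiftRight, max_eq_right (sub_nonpos.2 hs.2), hf0]
  · intro s hs
    simp only [shiftRight, max_eq_left (sub_nonneg.2 hs.1)]
    rw [show t - (s - (b - t)) = b - s by ring]

end Convolution

section RealSup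

variable {α : Type*} {F : α → ℝ} {s : Set α}

theorem biSup_nonneg (h : ∀ t ∈ s, 0 ≤ F t) : 0 ≤ ⨆ t ∈ s, F t :=
  Real.iSup_nonneg fun t => Real.iSup_nonneg (h t)

theorem biSup_le_of_nonneg {C : ℝ} (hC : 0 ≤ C) (h : ∀ t ∈ s, F t ≤ C) :
    ⨆ t ∈ s, F t ≤ C :=
  Real.iSup_le (fun t => Real.iSup_le (h t) hC) hC

theorem le_biSup_of_bddAbove (hF : BddAbove (F '' s)) {t : α} (ht : t ∈ s) :
    F t ≤ ⨆ t ∈ s, F t := by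
  obtain ⟨C, hC⟩ := hF
  refine le_ciSup₂ (f := fun t (_ : t ∈ s) => F t) ⟨C, ?_⟩ t ht
  rintro _ ⟨_, ⟨i, rfl⟩, ⟨hi, rfl⟩⟩
  exact hC ⟨i, hi, rfl⟩

end RealSup

theorem iterate_le_pow_mul {α : Type*} {P : α → Prop} {R : α → α} {N : α → ℝ} {K : ℝ}
    (hK : 0 ≤ K) (hR : ∀ f, P f → P (R f)) (hN : ∀ f, P f → N (R f) ≤ K * N f)
    (n : ℕ) {f : α} (hf : P f) : N (R^[n] f) ≤ K ^ n * N f := by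
  induction n generalizing f with
  | zero => simp
  | succ n ih =>
    rw [Function.iterate_succ_apply, pow_succ, mul_assoc]
    exact (ih (hR f hf)).trans (mul_le_mul_of_nonneg_left (hN f hf) (pow_nonneg hK n))

section OneStep

variable {X Xb : Type*} [AddCommGroup X] [Module ℝ X] [TopologicalSpace X]
  [AddCommGroup Xb] [Module ℝ Xb] [TopologicalSpace Xb] [IsTopologicalAddGroup Xb]
  [SeparatingDual ℝ Xb]

theorem iSup_seminorm_RB_le {p : Seminorm ℝ X} (hp : Continuous p)
    {Tb : ℝ → Xb →L[ℝ] Xb} (hTb : ∀ x, ContinuousOn (fun t => Tb t x) (Ici 0))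
    (hTbloc : IsLocallyEquicontinuous Tb) (e B : X →L[ℝ] Xb) {t₀ K : ℝ} (hK : 0 ≤ K)
    (hc : ∀ f : ℝ → X, ContinuousOn f (Icc 0 t₀) →
      ∃ x : X, IsRiemannIntegral (fun t => Tb (t₀ - t) (B (f t))) 0 t₀ (e x))
    (hdK : ∀ f : ℝ → X, ContinuousOn f (Icc 0 t₀) → ∀ x : X,
      IsRiemannIntegral (fun t => Tb (t₀ - t) (B (f t))) 0 t₀ (e x) →
        p x ≤ K * ⨆ t ∈ Icc 0 t₀, p (f t))
    {RB : (ℝ → X) → ℝ → X}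
    (hRB : ∀ f : ℝ → X, MemXc t₀ f → MemXc t₀ (RB f) ∧ ∀ t ∈ Icc 0 t₀,
      IsRiemannIntegral (fun s => Tb (t - s) (B (f s))) 0 t (e (RB f t)))
    {f : ℝ → X} (hf : MemXc t₀ f) :
    ⨆ t ∈ Icc 0 t₀, p (RB f t) ≤ K * ⨆ t ∈ Icc 0 t₀, p (f t) := by
  have hsup_nonneg : 0 ≤ ⨆ t ∈ Icc 0 t₀, p (f t) := biSup_nonneg fun _ _ => apply_nonneg _ _
  refine biSup_le_of_nonneg (mul_nonneg hK hsup_nonneg) fun t ht => ?_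
  obtain rfl | ht0 := ht.1.eq_or_lt
  · rw [(hRB f hf).1.2, map_zero]
    exact mul_nonneg hK hsup_nonneg
  have hd : 0 ≤ t₀ - t := sub_nonneg.2 ht.2
  have hg := hf.1.shiftRight hd
  obtain ⟨x, hx⟩ := hc _ hg
  have hx_eq : e x = e (RB f t) :=
    hx.eq_of_shiftRight hTb hTbloc B ht0 ht.2 hf.1 hf.2 ((hRB f hf).2 t ht)
  calc p (RB f t) ≤ K * ⨆ s ∈ Icc 0 t₀, p (shiftRight (t₀ - t) f s) := hdK _ hg _ (hx_eq ▸ hx)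
    _ ≤ K * ⨆ t ∈ Icc 0 t₀, p (f t) := by
      refine mul_le_mul_of_nonneg_left (biSup_le_of_nonneg hsup_nonneg fun s hs => ?_) hK
      exact le_biSup_of_bddAbove (isCompact_Icc.bddAbove_image (hp.comp_continuousOn hf.1))
        (mapsTo_max_sub_zero_Icc hd hs)

end OneStep

end DS

theorem RB_iterate_estimate_general
    {X Xb : Type*} {ι : Type*} [Nonempty ι]
    [AddCommGroup X] [Module ℝ X] [UniformSpace X]
    [AddCommGroup Xb] [Module ℝ Xb] [UniformSpace Xb] [IsUniformAddGroup Xb]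
    [ContinuousSMul ℝ Xb] [T2Space Xb] [LocallyConvexSpace ℝ Xb]
    (Γ : SeminormFamily ℝ X ι) (hΓ : WithSeminorms Γ)
    (e : X →L[ℝ] Xb)
    (Tb : ℝ → Xb →L[ℝ] Xb) (hTb : IsC0Semigroup Tb) (hTbloc : IsLocallyEquicontinuous Tb)
    (B : X →L[ℝ] Xb)
    (t₀ : ℝ)
    -- condition (c): the integral `∫₀^{t₀} T̄(t₀ - t) B f(t) dt` belongs to `X`
    (hc : ∀ f : ℝ → X, ContinuousOn f (Icc (0 : ℝ) t₀) →
      ∃ x : X, IsRiemannIntegral (fun t : ℝ => Tb (t₀ - t) (B (f t))) 0 t₀ (e x))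
    -- `RB` is the operator `R̄ℬ : 𝒳 → 𝒳`, `(R̄ℬ f)(t) = ∫₀ᵗ T̄(t-s) B f(s) ds`
    (RB : (ℝ → X) → ℝ → X)
    (hRB : ∀ f : ℝ → X, MemXc t₀ f → MemXc t₀ (RB f) ∧
      ∀ t ∈ Icc (0 : ℝ) t₀,
        IsRiemannIntegral (fun s : ℝ => Tb (t - s) (B (f s))) 0 t (e (RB f t)))
    :
    ∀ i : ι, ∀ K : ℝ, K ∈ Ioo (0 : ℝ) 1 →
      (∀ f : ℝ → X, ContinuousOn f (Icc (0 : ℝ) t₀) → ∀ x : X,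
        IsRiemannIntegral (fun t : ℝ => Tb (t₀ - t) (B (f t))) 0 t₀ (e x) →
          Γ i x ≤ K * ⨆ t ∈ Icc (0 : ℝ) t₀, Γ i (f t)) →
      ∀ (n : ℕ) (f : ℝ → X), MemXc t₀ f →
        (⨆ t ∈ Icc (0 : ℝ) t₀, Γ i ((RB^[n] f) t)) ≤
          K ^ n * ⨆ t ∈ Icc (0 : ℝ) t₀, Γ i (f t) := by
  intro i K hK hdK n f hf
  exact iterate_le_pow_mul (N := fun g => ⨆ t ∈ Icc (0 : ℝ) t₀, Γ i (g t)) hK.1.le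
    (fun g hg => (hRB g hg).1)
    (fun g hg => iSup_seminorm_RB_le (hΓ.continuous_seminorm i) hTb.2.2 hTbloc e B hK.1.le hc hdK
      hRB hg) n hf

/-- Under the standing assumptions of the Desch–Schappacher theorem: for every seminorm
`Γ i` of the fundamental system and every `K ∈ (0,1)` chosen for `Γ i` as in assumption
(d), one has `p^∞((R̄ℬ)ⁿ f) ≤ Kⁿ · p^∞(f)` for every `n ∈ ℕ` and every `f ∈ 𝒳`, where
`p^∞(g) = sup_{t ∈ [0,t₀]} Γ i (g t)`. -/
theorem RB_iterate_estimate
    {X Xb : Type*} {ι : Type*} [Nonempty ι]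
    [AddCommGroup X] [Module ℝ X] [UniformSpace X] [IsUniformAddGroup X]
    [ContinuousSMul ℝ X] [T2Space X]
    [AddCommGroup Xb] [Module ℝ Xb] [UniformSpace Xb] [IsUniformAddGroup Xb]
    [ContinuousSMul ℝ Xb] [T2Space Xb] [LocallyConvexSpace ℝ Xb]
    (hXsc : SeqComplete X) (hXbsc : SeqComplete Xb)
    (Γ : SeminormFamily ℝ X ι) (hΓ : WithSeminorms Γ)
    (T : ℝ → X →L[ℝ] X) (hT : IsC0Semigroup T) (hTloc : IsLocallyEquicontinuous T)
    (domA : Set X) (A : X → X) (hA : IsGenerator T domA A)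
    (e : X →L[ℝ] Xb) (he : Function.Injective e) (hedense : DenseRange e)
    (Tb : ℝ → Xb →L[ℝ] Xb) (hTb : IsC0Semigroup Tb) (hTbloc : IsLocallyEquicontinuous Tb)
    (Ab : Xb → Xb) (hAb : IsGenerator Tb (Set.range e) Ab)
    (hTbe : ∀ t : ℝ, 0 ≤ t → ∀ x : X, Tb t (e x) = e (T t x))
    (B : X →L[ℝ] Xb)
    (t₀ : ℝ) (ht₀ : 0 < t₀)
    -- condition (c): the integral `∫₀^{t₀} T̄(t₀ - t) B f(t) dt` belongs to `X`
    (hc : ∀ f : ℝ → X, ContinuousOn f (Icc (0 : ℝ) t₀) →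
      ∃ x : X, IsRiemannIntegral (fun t : ℝ => Tb (t₀ - t) (B (f t))) 0 t₀ (e x))
    -- condition (d): `p(∫₀^{t₀} T̄(t₀ - t) B f(t) dt) ≤ K · sup_{t ∈ [0,t₀]} p(f t)`
    (hd : ∀ i : ι, ∃ K : ℝ, K ∈ Ioo (0 : ℝ) 1 ∧
      ∀ f : ℝ → X, ContinuousOn f (Icc (0 : ℝ) t₀) → ∀ x : X,
        IsRiemannIntegral (fun t : ℝ => Tb (t₀ - t) (B (f t))) 0 t₀ (e x) →
          Γ i x ≤ K * ⨆ t ∈ Icc (0 : ℝ) t₀, Γ i (f t))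
    -- `RB` is the operator `R̄ℬ : 𝒳 → 𝒳`, `(R̄ℬ f)(t) = ∫₀ᵗ T̄(t-s) B f(s) ds`
    (RB : (ℝ → X) → ℝ → X)
    (hRB : ∀ f : ℝ → X, MemXc t₀ f → MemXc t₀ (RB f) ∧
      ∀ t ∈ Icc (0 : ℝ) t₀,
        IsRiemannIntegral (fun s : ℝ => Tb (t - s) (B (f s))) 0 t (e (RB f t)))
    :
    ∀ i : ι, ∀ K : ℝ, K ∈ Ioo (0 : ℝ) 1 →
      (∀ f : ℝ → X, ContinuousOn f (Icc (0 : ℝ) t₀) → ∀ x : X,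
        IsRiemannIntegral (fun t : ℝ => Tb (t₀ - t) (B (f t))) 0 t₀ (e x) →
          Γ i x ≤ K * ⨆ t ∈ Icc (0 : ℝ) t₀, Γ i (f t)) →
      ∀ (n : ℕ) (f : ℝ → X), MemXc t₀ f →
        (⨆ t ∈ Icc (0 : ℝ) t₀, Γ i ((RB^[n] f) t)) ≤
          K ^ n * ⨆ t ∈ Icc (0 : ℝ) t₀, Γ i (f t) :=
  RB_iterate_estimate_general Γ hΓ e Tb hTb hTbloc B t₀ hc RB hRB
end

section
/- Under the standing assumptions, with 𝒟f = f′ on D(𝒟) = {f ∈ 𝒳 ∩ C¹([0,t₀],X) : f′(0) = 0}: for every f ∈ D(𝒟) one has R̄ℬ f ∈ D(𝒟) and 𝒟(R̄ℬ f) = R̄ℬ(𝒟 f), and consequently R_C f ∈ D(𝒟) and 𝒟(R_C f) = R_C(𝒟 f), where (R̄ℬ f)(t) = ∫₀ᵗ T̄(t−s) B f(s) ds and R_C f = Σ_{n=0}^∞ (R̄ℬ)ⁿ R f with (R f)(t) = ∫₀ᵗ T(t−s) f(s) ds. -/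
open Filter Topology Set MeasureTheory

open DS

/-!
Both `R` and `R̄ℬ` are Volterra operators `(V f)(t) = ∫₀ᵗ S(t - s) B f(s) ds`. Extending `f`
by `0` to negative times, `(V f)(u) = ∫₀^{t₀} S(t₀ - s) B f(s + u - t₀) ds` for every
`u ∈ [0, t₀]`, so the increments of `V f` are integrals over the fixed interval `[0, t₀]` of
increments of `f`. An estimate `p(∫₀^{t₀} S(t₀ - s) B Ψ(s) ds) ≤ C · sup q(Ψ)` (local
equicontinuity for `R`, condition (d) for `R̄ℬ`) and the uniform differentiability of `f` on the
compact interval then give `𝒟(V f) = V(𝒟 f)`. Every partial sum `Σ_{n<N} (R̄ℬ)ⁿ R f` of `R_C f`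
therefore commutes with `𝒟`; the partial sums and their derivatives converge uniformly, and a
mean value inequality for seminorms carries the derivative over to the limit.
-/

namespace DS

section RiemannSums

variable {E F : Type*} [AddCommGroup E] [Module ℝ E] [TopologicalSpace E]
  [AddCommGroup F] [Module ℝ F] [TopologicalSpace F]

noncomputable def riemannSum (g : ℝ → E) (a b : ℝ) (n : ℕ) : E :=
  ((b - a) / n) • ∑ k ∈ Finset.range n, g (a + (b - a) * k / n)

theorem riemannSum_node_mem_Icc {a b : ℝ} (hab : a ≤ b) {n k : ℕ} (hk : k ≤ n) :
    a + (b - a) * k / n ∈ Icc a b := by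
  rcases Nat.eq_zero_or_pos n with rfl | hn
  · simp [hab]
  have hkn : (k : ℝ) / n ≤ 1 := div_le_one_of_le₀ (by exact_mod_cast hk) n.cast_nonneg
  have h0 : 0 ≤ (k : ℝ) / n := by positivity
  rw [mul_div_assoc]
  constructor <;> nlinarith

theorem IsRiemannIntegral.congr {f g : ℝ → E} {a b : ℝ} {I : E} (hab : a ≤ b)
    (hf : IsRiemannIntegral f a b I) (hfg : EqOn f g (Icc a b)) : IsRiemannIntegral g a b I := by
  refine Tendsto.congr (fun n => ?_) hf
  congr 1
  exact Finset.sum_congr rfl fun k hk =>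
    hfg (riemannSum_node_mem_Icc hab (Finset.mem_range.1 hk).le)

theorem IsRiemannIntegral.sub [IsTopologicalAddGroup E] {f g : ℝ → E} {a b : ℝ} {I J : E}
    (hf : IsRiemannIntegral f a b I) (hg : IsRiemannIntegral g a b J) :
    IsRiemannIntegral (fun x => f x - g x) a b (I - J) := by
  refine (Filter.Tendsto.sub hf hg).congr fun n => ?_
  simp only [Finset.sum_sub_distrib, smul_sub]

theorem IsRiemannIntegral.const_smul [ContinuousConstSMul ℝ E] {f : ℝ → E} {a b : ℝ} {I : E}
    (hf : IsRiemannIntegral f a b I) (c : ℝ) :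
    IsRiemannIntegral (fun x => c • f x) a b (c • I) := by
  refine (Filter.Tendsto.const_smul hf c).congr fun n => ?_
  simp only [Finset.smul_sum, smul_comm c]

theorem IsRiemannIntegral.map_s10 {f : ℝ → E} {a b : ℝ} {I : E}
    (hf : IsRiemannIntegral f a b I) (L : E →L[ℝ] F) :
    IsRiemannIntegral (fun x => L (f x)) a b (L I) := by
  refine ((L.continuous.tendsto I).comp hf).congr fun n => ?_
  simp only [Function.comp_apply, map_smul, map_sum]

theorem IsRiemannIntegral.seminorm_le {p : Seminorm ℝ E} (hp : Continuous p) {f : ℝ → E}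
    {a b M : ℝ} {I : E} (hab : a ≤ b) (hf : IsRiemannIntegral f a b I)
    (hM : ∀ x ∈ Icc a b, p (f x) ≤ M) : p I ≤ (b - a) * M := by
  refine le_of_tendsto ((hp.tendsto I).comp hf) (Eventually.of_forall fun n => ?_)
  rcases Nat.eq_zero_or_pos n with rfl | hn
  · have : 0 ≤ M := (apply_nonneg p _).trans (hM a ⟨le_rfl, hab⟩)
    simpa using mul_nonneg (sub_nonneg.2 hab) this
  have hstep : 0 ≤ (b - a) / n := div_nonneg (sub_nonneg.2 hab) n.cast_nonneg
  calc p (((b - a) / n) • ∑ k ∈ Finset.range n, f (a + (b - a) * k / n))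
      ≤ (b - a) / n * ∑ k ∈ Finset.range n, p (f (a + (b - a) * k / n)) := by
        rw [map_smul_eq_mul, Real.norm_of_nonneg hstep]
        exact mul_le_mul_of_nonneg_left
          (Finset.le_sum_of_subadditive p (map_zero p).le (map_add_le_add p) _ _) hstep
    _ ≤ (b - a) / n * ∑ _k ∈ Finset.range n, M := by
        gcongr with k hk
        exact hM _ (riemannSum_node_mem_Icc hab (Finset.mem_range.1 hk).le)
    _ = (b - a) * M := by
        rw [Finset.sum_const, Finset.card_range, nsmul_eq_mul]
        field_simp

end RiemannSums

theorem abs_mul_sub_intervalIntegral_le {ψ : ℝ → ℝ} {x h ε : ℝ} (hh : 0 ≤ h)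
    (hψ : ContinuousOn ψ (Icc x (x + h))) (hε : ∀ y ∈ Icc x (x + h), |ψ x - ψ y| ≤ ε) :
    |h * ψ x - ∫ y in x..x + h, ψ y| ≤ h * ε := by
  have hx : x ≤ x + h := le_add_of_nonneg_right hh
  have hconst : h * ψ x = ∫ _ in x..x + h, ψ x := by
    rw [intervalIntegral.integral_const, smul_eq_mul, add_sub_cancel_left]
  rw [hconst, ← intervalIntegral.integral_sub intervalIntegrable_const
    (hψ.mono (uIcc_of_le hx).subset).intervalIntegrable]
  have := intervalIntegral.norm_integral_le_of_norm_le_const (C := ε)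
    (f := fun y => ψ x - ψ y) fun y hy => hε y (Ioc_subset_Icc_self (uIoc_of_le hx ▸ hy))
  rwa [Real.norm_eq_abs, add_sub_cancel_left, abs_of_nonneg hh, mul_comm] at this

theorem abs_riemannSum_sub_integral_le {ψ : ℝ → ℝ} {a b ε : ℝ} {n : ℕ} (hab : a ≤ b)
    (hn : 0 < n) (hψ : ContinuousOn ψ (Icc a b))
    (hε : ∀ x ∈ Icc a b, ∀ y ∈ Icc a b, |x - y| ≤ (b - a) / n → |ψ x - ψ y| ≤ ε) :
    |riemannSum ψ a b n - ∫ x in a..b, ψ x| ≤ (b - a) * ε := by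
  set h := (b - a) / n
  set P : ℕ → ℝ := fun k => a + (b - a) * k / n
  have hh : 0 ≤ h := div_nonneg (sub_nonneg.2 hab) n.cast_nonneg
  have hstep : ∀ k, P (k + 1) = P k + h := fun k => by simp only [P, h]; push_cast; ring
  have hcell : ∀ k < n, Icc (P k) (P k + h) ⊆ Icc a b := fun k hk => hstep k ▸
    Icc_subset_Icc (riemannSum_node_mem_Icc hab hk.le).1 (riemannSum_node_mem_Icc hab hk).2
  have hsum : ∫ x in a..b, ψ x = ∑ k ∈ Finset.range n, ∫ x in (P k)..(P k + h), ψ x := by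
    simp only [← hstep]
    rw [intervalIntegral.sum_integral_adjacent_intervals fun k hk =>
      (hψ.mono ((uIcc_of_le (by linarith [hstep k])).trans_subset
        (hstep k ▸ hcell k hk))).intervalIntegrable]
    congr 1
    · simp [P]
    · simp only [P]; field_simp; ring
  calc |riemannSum ψ a b n - ∫ x in a..b, ψ x|
      = |∑ k ∈ Finset.range n, (h * ψ (P k) - ∫ x in (P k)..(P k + h), ψ x)| := by
        rw [hsum, Finset.sum_sub_distrib, riemannSum, smul_eq_mul, Finset.mul_sum]
    _ ≤ ∑ _k ∈ Finset.range n, h * ε := by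
        refine (Finset.abs_sum_le_sum_abs _ _).trans (Finset.sum_le_sum fun k hk => ?_)
        have hk := hcell k (Finset.mem_range.1 hk)
        refine abs_mul_sub_intervalIntegral_le hh (hψ.mono hk) fun y hy =>
          hε _ (hk (left_mem_Icc.2 (by linarith))) _ (hk hy) ?_
        rw [abs_sub_comm, abs_of_nonneg (by linarith [hy.1])]
        linarith [hy.2]
    _ = (b - a) * ε := by
        rw [Finset.sum_const, Finset.card_range, nsmul_eq_mul]
        simp only [h]
        field_simp

theorem isRiemannIntegral_intervalIntegral {ψ : ℝ → ℝ} {a b : ℝ} (hab : a ≤ b)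
    (hψ : ContinuousOn ψ (Icc a b)) : IsRiemannIntegral ψ a b (∫ x in a..b, ψ x) := by
  show Tendsto (riemannSum ψ a b) atTop _
  rw [Metric.tendsto_atTop]
  intro ε hε
  set η := ε / (b - a + 1)
  have hη : 0 < η := div_pos hε (by linarith)
  obtain ⟨δ, hδ, hδη⟩ := Metric.uniformContinuousOn_iff_le.1
    (isCompact_Icc.uniformContinuousOn_of_continuous hψ) η hη
  obtain ⟨N, hN⟩ := exists_nat_gt ((b - a) / δ)
  refine ⟨N + 1, fun n hn => ?_⟩
  have hn0 : (0 : ℝ) < n := by exact_mod_cast Nat.succ_le_iff.1 (le_of_add_le_right hn)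
  have hmesh : (b - a) / n ≤ δ := by
    rw [div_le_iff₀ hn0]
    have := (div_lt_iff₀ hδ).1 hN
    have : (N : ℝ) + 1 ≤ n := by exact_mod_cast hn
    nlinarith
  rw [Real.dist_eq]
  calc |riemannSum ψ a b n - ∫ x in a..b, ψ x| ≤ (b - a) * η :=
        abs_riemannSum_sub_integral_le hab (by exact_mod_cast hn0) hψ fun x hx y hy hxy =>
          hδη x hx y hy (by rw [Real.dist_eq]; exact hxy.trans hmesh)
    _ < ε := by
        rw [mul_div_assoc', div_lt_iff₀ (by linarith)]
        nlinarith

section Scalarization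

variable {E : Type*} [AddCommGroup E] [Module ℝ E] [TopologicalSpace E]

theorem IsRiemannIntegral.apply_eq_intervalIntegral {g : ℝ → E} {a b : ℝ} {I : E}
    (hab : a ≤ b) (hI : IsRiemannIntegral g a b I) (hg : ContinuousOn g (Icc a b))
    (φ : E →L[ℝ] ℝ) : φ I = ∫ x in a..b, φ (g x) :=
  tendsto_nhds_unique (hI.map_s10 φ)
    (isRiemannIntegral_intervalIntegral hab (φ.continuous.comp_continuousOn hg))

theorem IsRiemannIntegral.eq_of_comp_add [IsTopologicalAddGroup E] [ContinuousSMul ℝ E]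
    [LocallyConvexSpace ℝ E] [T2Space E] {F : ℝ → E} {b c : ℝ} (hb : 0 ≤ b) (hbc : b ≤ c)
    (hF : ContinuousOn F (Icc (b - c) b)) (hF0 : ∀ σ ∈ Icc (b - c) 0, F σ = 0) {I J : E}
    (hI : IsRiemannIntegral F 0 b I)
    (hJ : IsRiemannIntegral (fun s => F (s + (b - c))) 0 c J) : I = J := by
  refine (SeparatingDual.eq_iff_forall_dual_eq (R := ℝ)).2 fun φ => ?_
  have hφF : ContinuousOn (fun σ => φ (F σ)) (Icc (b - c) b) :=
    φ.continuous.comp_continuousOn hF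
  have hshift : ContinuousOn (fun s => F (s + (b - c))) (Icc 0 c) :=
    hF.comp (continuous_add_const _).continuousOn
      fun s hs => ⟨by linarith [hs.1], by linarith [hs.2]⟩
  have hneg : ∫ σ in (b - c)..0, φ (F σ) = 0 := by
    rw [intervalIntegral.integral_congr (g := fun _ => (0 : ℝ)), intervalIntegral.integral_zero]
    intro σ hσ
    rw [uIcc_of_le (by linarith)] at hσ
    simp [hF0 σ hσ]
  rw [hI.apply_eq_intervalIntegral hb (hF.mono (Icc_subset_Icc (by linarith) le_rfl)) φ,
    hJ.apply_eq_intervalIntegral (hb.trans hbc) hshift φ,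
    intervalIntegral.integral_comp_add_right (fun σ => φ (F σ)), zero_add, add_sub_cancel,
    ← intervalIntegral.integral_add_adjacent_intervals (a := b - c) (b := 0) (c := b), hneg,
    zero_add]
  · exact (hφF.mono (by rw [uIcc_of_le (by linarith)]; exact Icc_subset_Icc le_rfl hb))
      |>.intervalIntegrable
  · exact (hφF.mono (by rw [uIcc_of_le hb]; exact Icc_subset_Icc (by linarith) le_rfl))
      |>.intervalIntegrable

end Scalarization

section DerivCalculus

variable {E : Type*} [AddCommGroup E] [Module ℝ E] [TopologicalSpace E]
  {g g₁ g₂ : ℝ → E} {y y₁ y₂ : E} {s s' : Set ℝ} {t : ℝ}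

theorem HasDerivWithinAtLC.mono (h : HasDerivWithinAtLC g y s t) (hs : s' ⊆ s) :
    HasDerivWithinAtLC g y s' t :=
  Tendsto.mono_left h (nhdsWithin_mono _ (sdiff_subset_sdiff_left hs))

theorem HasDerivWithinAtLC.continuousWithinAt [IsTopologicalAddGroup E] [ContinuousSMul ℝ E]
    (h : HasDerivWithinAtLC g y s t) : ContinuousWithinAt g s t := by
  rw [← continuousWithinAt_sdiff_self]
  have hlim : Tendsto (fun u : ℝ => (u - t) • ((u - t)⁻¹ • (g u - g t)) + g t)
      (𝓝[s \ {t}] t) (𝓝 ((t - t) • y + g t)) :=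
    ((tendsto_nhdsWithin_of_tendsto_nhds (continuous_sub_right t).continuousAt).smul h).add
      tendsto_const_nhds
  rw [sub_self, zero_smul, zero_add] at hlim
  refine hlim.congr' ?_
  filter_upwards [self_mem_nhdsWithin] with u hu
  rw [smul_inv_smul₀ (sub_ne_zero.2 hu.2), sub_add_cancel]

theorem HasDerivWithinAtLC.sub [IsTopologicalAddGroup E] (h₁ : HasDerivWithinAtLC g₁ y₁ s t)
    (h₂ : HasDerivWithinAtLC g₂ y₂ s t) :
    HasDerivWithinAtLC (fun u => g₁ u - g₂ u) (y₁ - y₂) s t :=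
  (Tendsto.sub h₁ h₂).congr fun u => by simp only [smul_sub]; abel

theorem hasDerivWithinAtLC_sum [IsTopologicalAddGroup E] {ι : Type*} {S : Finset ι}
    {G : ι → ℝ → E} {Y : ι → E}
    (h : ∀ n ∈ S, HasDerivWithinAtLC (G n) (Y n) s t) :
    HasDerivWithinAtLC (fun u => ∑ n ∈ S, G n u) (∑ n ∈ S, Y n) s t :=
  (tendsto_finsetSum S h).congr fun u => by rw [← Finset.sum_sub_distrib, Finset.smul_sum]

theorem hasDerivWithinAtLC_const (c : E) : HasDerivWithinAtLC (fun _ => c) 0 s t :=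
  tendsto_const_nhds.congr fun u => by simp

theorem hasDerivWithinAtLC_smul_const (v : E) :
    HasDerivWithinAtLC (fun u : ℝ => u • v) v s t := by
  refine tendsto_const_nhds.congr' ?_
  filter_upwards [self_mem_nhdsWithin] with u hu
  rw [← sub_smul, inv_smul_smul₀ (sub_ne_zero.2 hu.2)]

theorem HasDerivWithinAtLC.congr (h : HasDerivWithinAtLC g₁ y s t) (hs : EqOn g₁ g₂ s)
    (ht : g₁ t = g₂ t) : HasDerivWithinAtLC g₂ y s t := by
  refine Tendsto.congr' ?_ h
  filter_upwards [self_mem_nhdsWithin] with u hu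
  rw [hs hu.1, ht]

theorem HasDerivWithinAtLC.union (h : HasDerivWithinAtLC g y s t)
    (h' : HasDerivWithinAtLC g y s' t) : HasDerivWithinAtLC g y (s ∪ s') t := by
  rw [HasDerivWithinAtLC, union_sdiff_distrib, nhdsWithin_union]
  exact h.sup h'

theorem hasDerivWithinAtLC_of_notMem_closure (ht : t ∉ closure s) :
    HasDerivWithinAtLC g y s t := by
  rw [HasDerivWithinAtLC, notMem_closure_iff_nhdsWithin_eq_bot.1
    fun h => ht (closure_mono sdiff_subset h)]
  exact tendsto_bot

theorem hasDerivWithinAtLC_of_seminorm_le {ι : Type*} {Γ : SeminormFamily ℝ E ι}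
    (hΓ : WithSeminorms Γ)
    (h : ∀ i, ∀ ε > 0, ∃ δ > 0, ∀ u ∈ s, |u - t| < δ →
      Γ i (g u - g t - (u - t) • y) ≤ ε * |u - t|) :
    HasDerivWithinAtLC g y s t := by
  rw [HasDerivWithinAtLC, hΓ.tendsto_nhds]
  intro i ε hε
  obtain ⟨δ, hδ, hδε⟩ := h i (ε / 2) (half_pos hε)
  have hnear : ∀ᶠ u in 𝓝[s \ {t}] t, |u - t| < δ :=
    eventually_nhdsWithin_of_eventually_nhds
      (Metric.eventually_nhds_iff.2 ⟨δ, hδ, fun {_} hu => by rwa [Real.dist_eq] at hu⟩)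
  filter_upwards [hnear, self_mem_nhdsWithin] with u hu hus
  replace hu := hδε u hus.1 hu
  have hut : u - t ≠ 0 := sub_ne_zero.2 hus.2
  have hquot : (u - t)⁻¹ • (g u - g t) - y = (u - t)⁻¹ • (g u - g t - (u - t) • y) := by
    rw [smul_sub _ (g u - g t), inv_smul_smul₀ hut]
  rw [hquot, map_smul_eq_mul, norm_inv, Real.norm_eq_abs]
  calc |u - t|⁻¹ * Γ i (g u - g t - (u - t) • y) ≤ ε / 2 :=
        (inv_mul_le_iff₀ (abs_pos.2 hut)).2 (hu.trans_eq (mul_comm _ _))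
    _ < ε := half_lt_self hε

end DerivCalculus

section SeminormEstimates

variable {E : Type*} [AddCommGroup E] [Module ℝ E] [TopologicalSpace E]
  [IsTopologicalAddGroup E] {p : Seminorm ℝ E}

theorem exists_pos_forall_seminorm_sub_lt (hp : Continuous p) {F : ℝ → E} {J : Set ℝ}
    (hJ : IsCompact J) (hF : ContinuousOn F J) {ε : ℝ} (hε : 0 < ε) :
    ∃ δ > 0, ∀ σ ∈ J, ∀ τ ∈ J, |τ - σ| < δ → p (F τ - F σ) < ε := by
  have hH : ContinuousOn (fun q : ℝ × ℝ => p (F q.2 - F q.1)) (J ×ˢ J) :=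
    hp.comp_continuousOn ((hF.comp continuousOn_snd fun q hq => hq.2).sub
      (hF.comp continuousOn_fst fun q hq => hq.1))
  obtain ⟨δ, hδ, hδε⟩ := Metric.uniformContinuousOn_iff.1
    ((hJ.prod hJ).uniformContinuousOn_of_continuous hH) ε hε
  refine ⟨δ, hδ, fun σ hσ τ hτ hστ => ?_⟩
  have := hδε (σ, τ) ⟨hσ, hτ⟩ (σ, σ) ⟨hσ, hσ⟩ (by simpa [Prod.dist_eq, Real.dist_eq] using hστ)
  simpa [Real.dist_eq, abs_of_nonneg (apply_nonneg p _)] using this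

variable [ContinuousSMul ℝ E] {g g' : ℝ → E}

theorem seminorm_sub_le_of_hasDerivWithinAtLC_Icc (hp : Continuous p) {a b C : ℝ} (hab : a ≤ b)
    (hg : ∀ t ∈ Icc a b, HasDerivWithinAtLC g (g' t) (Icc a b) t)
    (hC : ∀ t ∈ Icc a b, p (g' t) ≤ C) : p (g b - g a) ≤ C * (b - a) := by
  set F : ℝ → ℝ := fun x => p (g x - g a)
  have hFc : ContinuousOn F (Icc a b) :=
    hp.comp_continuousOn
      (ContinuousOn.sub (fun t ht => (hg t ht).continuousWithinAt) continuousOn_const)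
  refine image_le_of_liminf_slope_right_le_deriv_boundary (B := fun x => C * (x - a))
    (B' := fun _ => C) hFc (by simp [F]) (by fun_prop)
    (fun x _ => by simpa using ((hasDerivWithinAt_id x (Ici x)).sub_const a).const_mul C)
    ?_ ⟨hab, le_rfl⟩
  intro x hx r hr
  have hxI : x ∈ Icc a b := Ico_subset_Icc_self hx
  have hev : ∀ᶠ z in 𝓝[Icc a b \ {x}] x, p ((z - x)⁻¹ • (g z - g x)) < r :=
    ((hp.tendsto _).comp (hg x hxI)).eventually_lt_const ((hC x hxI).trans_lt hr)
  have hsub : 𝓝[Ioc x b] x ≤ 𝓝[Icc a b \ {x}] x :=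
    nhdsWithin_mono _ fun z hz => ⟨⟨hx.1.trans hz.1.le, hz.2⟩, hz.1.ne'⟩
  have : (𝓝[Ioc x b] x).NeBot :=
    mem_closure_iff_nhdsWithin_neBot.1 (by rw [closure_Ioc hx.2.ne]; exact ⟨le_rfl, hx.2.le⟩)
  refine (((hev.filter_mono hsub).and self_mem_nhdsWithin).frequently.mono ?_).filter_mono
    (nhdsWithin_mono _ Ioc_subset_Ioi_self)
  rintro z ⟨hzr, hz⟩
  have hzx : 0 < z - x := sub_pos.2 hz.1
  refine lt_of_le_of_lt ?_ hzr
  rw [slope_def_field, map_smul_eq_mul, Real.norm_of_nonneg (inv_nonneg.2 hzx.le),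
    div_eq_inv_mul]
  refine mul_le_mul_of_nonneg_left ?_ (inv_nonneg.2 hzx.le)
  have := map_add_le_add p (g z - g x) (g x - g a)
  rw [sub_add_sub_cancel] at this
  simp only [F]
  linarith

theorem seminorm_sub_le_of_hasDerivWithinAtLC (hp : Continuous p) {a b C : ℝ}
    (hg : ∀ t ∈ uIcc a b, HasDerivWithinAtLC g (g' t) (uIcc a b) t)
    (hC : ∀ t ∈ uIcc a b, p (g' t) ≤ C) : p (g b - g a) ≤ C * |b - a| := by
  wlog hab : a ≤ b generalizing a b
  · rw [map_sub_rev, abs_sub_comm]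
    exact this (uIcc_comm a b ▸ hg) (uIcc_comm a b ▸ hC) (le_of_not_ge hab)
  rw [uIcc_of_le hab] at hg hC
  rw [abs_of_nonneg (sub_nonneg.2 hab)]
  exact seminorm_sub_le_of_hasDerivWithinAtLC_Icc hp hab hg hC

theorem seminorm_sub_sub_smul_le_of_hasDerivWithinAtLC (hp : Continuous p) {σ τ ε : ℝ}
    (hg : ∀ z ∈ uIcc σ τ, HasDerivWithinAtLC g (g' z) (uIcc σ τ) z)
    (hε : ∀ z ∈ uIcc σ τ, p (g' z - g' σ) ≤ ε) :
    p (g τ - g σ - (τ - σ) • g' σ) ≤ ε * |τ - σ| := by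
  have := seminorm_sub_le_of_hasDerivWithinAtLC (g := fun w => g w - w • g' σ) hp
    (fun z hz => (hg z hz).sub (hasDerivWithinAtLC_smul_const _)) hε
  convert this using 2
  rw [sub_smul]
  abel

theorem seminorm_sub_sub_smul_le_of_abs_sub_lt (hp : Continuous p) {a b δ ε σ τ : ℝ}
    (hg : ∀ z ∈ Icc a b, HasDerivWithinAtLC g (g' z) (Icc a b) z)
    (hδ : ∀ σ ∈ Icc a b, ∀ τ ∈ Icc a b, |τ - σ| < δ → p (g' τ - g' σ) < ε)
    (hσ : σ ∈ Icc a b) (hτ : τ ∈ Icc a b) (hστ : |τ - σ| < δ) :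
    p (g τ - g σ - (τ - σ) • g' σ) ≤ ε * |τ - σ| := by
  have hsub := uIcc_subset_Icc hσ hτ
  exact seminorm_sub_sub_smul_le_of_hasDerivWithinAtLC hp
    (fun z hz => (hg z (hsub hz)).mono hsub)
    fun z hz => (hδ σ hσ z (hsub hz) ((Set.abs_sub_left_of_mem_uIcc hz).trans_lt hστ)).le

end SeminormEstimates

theorem continuousOn_comp_max_zero {E : Type*} [TopologicalSpace E] {g : ℝ → E} {a b t₀ : ℝ}
    (hg : ContinuousOn g (Icc 0 t₀)) (ht₀ : 0 ≤ t₀) (hb : b ≤ t₀) :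
    ContinuousOn (fun σ => g (max σ 0)) (Icc a b) :=
  hg.comp (continuous_id.max continuous_const).continuousOn
    fun _ hσ => ⟨le_max_right _ _, max_le (hσ.2.trans hb) ht₀⟩

theorem continuousOn_comp_max_zero_add {E : Type*} [TopologicalSpace E] {g : ℝ → E} {u t₀ : ℝ}
    (hg : ContinuousOn g (Icc 0 t₀)) (hu : u ∈ Icc 0 t₀) :
    ContinuousOn (fun s => g (max (s + (u - t₀)) 0)) (Icc 0 t₀) :=
  (continuousOn_comp_max_zero hg (hu.1.trans hu.2) hu.2 (a := u - t₀)).comp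
    (continuous_add_const _).continuousOn fun s hs => ⟨by linarith [hs.1], by linarith [hs.2]⟩

theorem hasDerivWithinAtLC_comp_max_zero {E : Type*} [AddCommGroup E] [Module ℝ E]
    [TopologicalSpace E] {f f' : ℝ → E} {a t₀ z : ℝ}
    (hf : ∀ t ∈ Icc 0 t₀, HasDerivWithinAtLC f (f' t) (Icc 0 t₀) t) (hf0 : f 0 = 0)
    (hf'0 : f' 0 = 0) (hz : z ∈ Icc a t₀) :
    HasDerivWithinAtLC (fun σ => f (max σ 0)) (f' (max z 0)) (Icc a t₀) z := by
  refine HasDerivWithinAtLC.mono (s := Iic 0 ∪ Icc 0 t₀) (.union ?_ ?_)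
    fun σ hσ => (le_total σ 0).imp id fun h => ⟨h, hσ.2⟩
  · rcases le_or_gt z 0 with hz0 | hz0
    · rw [max_eq_right hz0, hf'0]
      exact (hasDerivWithinAtLC_const 0).congr (fun σ hσ => by simp [max_eq_right hσ.out, hf0])
        (by simp [max_eq_right hz0, hf0])
    · exact hasDerivWithinAtLC_of_notMem_closure (by rw [closure_Iic]; exact not_le.2 hz0)
  · rcases le_or_gt 0 z with hz0 | hz0
    · rw [max_eq_left hz0]
      exact (hf z ⟨hz0, hz.2⟩).congr (fun σ hσ => by simp [max_eq_left hσ.1])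
        (by simp [max_eq_left hz0])
    · exact hasDerivWithinAtLC_of_notMem_closure
        (by rw [closure_Icc]; exact fun h => not_le.2 hz0 h.1)

section VolterraOperatorDefs

variable {X Y : Type*} [AddCommGroup X] [Module ℝ X] [TopologicalSpace X]
  [AddCommGroup Y] [Module ℝ Y] [TopologicalSpace Y]

/-- `(V f)(t) = ∫₀ᵗ S(t - s) B f(s) ds` on `[0, t₀]`, the integral being taken in `Y` and its
value lying in `X`, seen in `Y` through `e`. -/
def IsVolterraOperator (S : ℝ → Y →L[ℝ] Y) (B e : X →L[ℝ] Y) (t₀ : ℝ)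
    (V : (ℝ → X) → ℝ → X) : Prop :=
  ∀ f, MemXc t₀ f → MemXc t₀ (V f) ∧
    ∀ t ∈ Icc 0 t₀, IsRiemannIntegral (fun s => S (t - s) (B (f s))) 0 t (e (V f t))

/-- `p(x) ≤ C · sup_{[0,t₀]} q(Ψ)` whenever `x = ∫₀^{t₀} S(t₀ - s) B Ψ(s) ds`; for the
perturbation this is condition (d). -/
def HasIntegralEstimate (S : ℝ → Y →L[ℝ] Y) (B e : X →L[ℝ] Y) (t₀ : ℝ)
    (p : Seminorm ℝ X) : Prop :=
  ∃ C, 0 ≤ C ∧ ∃ q : Seminorm ℝ X, Continuous q ∧ ∀ (Ψ : ℝ → X) (x : X) (M : ℝ),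
    ContinuousOn Ψ (Icc 0 t₀) → IsRiemannIntegral (fun s => S (t₀ - s) (B (Ψ s))) 0 t₀ (e x) →
      (∀ s ∈ Icc 0 t₀, q (Ψ s) ≤ M) → p x ≤ C * M

theorem hasIntegralEstimate_of_le_mul_biSup {S : ℝ → Y →L[ℝ] Y} {B e : X →L[ℝ] Y} {t₀ K : ℝ}
    (ht₀ : 0 ≤ t₀) {p : Seminorm ℝ X} (hp : Continuous p) (hK : 0 ≤ K)
    (h : ∀ Ψ : ℝ → X, ContinuousOn Ψ (Icc 0 t₀) → ∀ x : X,
      IsRiemannIntegral (fun s => S (t₀ - s) (B (Ψ s))) 0 t₀ (e x) →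
        p x ≤ K * ⨆ s ∈ Icc 0 t₀, p (Ψ s)) :
    HasIntegralEstimate S B e t₀ p := by
  refine ⟨K, hK, p, hp, fun Ψ x M hΨ hx hM => (h Ψ hΨ x hx).trans ?_⟩
  have hM0 : 0 ≤ M := (apply_nonneg p _).trans (hM 0 ⟨le_rfl, ht₀⟩)
  exact mul_le_mul_of_nonneg_left
    (Real.iSup_le (fun s => Real.iSup_le (hM s) hM0) hM0) hK

end VolterraOperatorDefs

section Semigroups

variable {E : Type*} [AddCommGroup E] [Module ℝ E] [TopologicalSpace E]
  {S : ℝ → E →L[ℝ] E} {t₀ : ℝ}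

theorem IsLocallyEquicontinuous.continuousOn_apply [IsTopologicalAddGroup E]
    [ContinuousSMul ℝ E] [LocallyConvexSpace ℝ E] (hSloc : IsLocallyEquicontinuous S)
    (hS : ∀ v, ContinuousOn (fun t => S t v) (Ici 0)) (ht₀ : 0 < t₀) {J : Set ℝ}
    {τ : ℝ → ℝ} {y : ℝ → E} (hτ : ContinuousOn τ J) (hτJ : MapsTo τ J (Icc 0 t₀))
    (hy : ContinuousOn y J) : ContinuousOn (fun σ => S (τ σ) (y σ)) J := by
  have hgauge : WithSeminorms (gaugeSeminormFamily ℝ E) := with_gaugeSeminormFamily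
  intro σ₀ hσ₀
  have hfixed : Tendsto (fun σ => S (τ σ) (y σ₀)) (𝓝[J] σ₀) (𝓝 (S (τ σ₀) (y σ₀))) :=
    (hS (y σ₀) _ (hτJ hσ₀).1).comp (hτ σ₀ hσ₀) fun σ hσ => (hτJ hσ).1
  have hmoving : Tendsto (fun σ => S (τ σ) (y σ - y σ₀)) (𝓝[J] σ₀) (𝓝 0) := by
    rw [hgauge.tendsto_nhds]
    intro i ε hε
    obtain ⟨q, hq, M, -, hM⟩ := hSloc t₀ ht₀ _ (hgauge.continuous_seminorm i)
    have hlim : Tendsto (fun σ => M * q (y σ - y σ₀)) (𝓝[J] σ₀) (𝓝 (M * q (y σ₀ - y σ₀))) :=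
      ((hq.tendsto _).comp ((hy σ₀ hσ₀).sub tendsto_const_nhds)).const_mul M
    rw [sub_self, map_zero, mul_zero] at hlim
    filter_upwards [hlim.eventually_lt_const hε, self_mem_nhdsWithin] with σ hσε hσ
    rw [sub_zero]
    exact (hM _ _ (hτJ hσ)).trans_lt hσε
  simpa [ContinuousWithinAt] using hmoving.add hfixed

theorem IsLocallyEquicontinuous.hasIntegralEstimate (hSloc : IsLocallyEquicontinuous S)
    (ht₀ : 0 < t₀) {p : Seminorm ℝ E} (hp : Continuous p) :
    HasIntegralEstimate S (.id ℝ E) (.id ℝ E) t₀ p := by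
  obtain ⟨q, hq, K, hK, hSq⟩ := hSloc t₀ ht₀ p hp
  refine ⟨t₀ * K, by positivity, q, hq, fun Ψ x M _ hx hΨ => ?_⟩
  have := hx.seminorm_le hp ht₀.le fun s hs =>
    (hSq _ _ ⟨by linarith [hs.2], by linarith [hs.1]⟩).trans
      (mul_le_mul_of_nonneg_left (hΨ s hs) hK)
  rw [ContinuousLinearMap.id_apply, sub_zero, ← mul_assoc] at this
  exact this

end Semigroups

section VolterraOperators

variable {X Y : Type*} [AddCommGroup X] [Module ℝ X] [TopologicalSpace X]
  [AddCommGroup Y] [Module ℝ Y] [TopologicalSpace Y] [IsTopologicalAddGroup Y]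
  [ContinuousSMul ℝ Y] [LocallyConvexSpace ℝ Y] [T2Space Y]
  {S : ℝ → Y →L[ℝ] Y} {B e : X →L[ℝ] Y} {t₀ : ℝ} {V : (ℝ → X) → ℝ → X}

theorem IsVolterraOperator.isRiemannIntegral_shift (hV : IsVolterraOperator S B e t₀ V)
    (hSloc : IsLocallyEquicontinuous S) (hS : ∀ v, ContinuousOn (fun t => S t v) (Ici 0))
    (ht₀ : 0 < t₀) {g : ℝ → X} (hg : MemXc t₀ g) {u : ℝ} (hu : u ∈ Icc 0 t₀) :
    IsRiemannIntegral (fun s => S (t₀ - s) (B (g (max (s + (u - t₀)) 0)))) 0 t₀ (e (V g u)) := by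
  set Φ : ℝ → X := fun s => g (max (s + (u - t₀)) 0)
  have hΦ : MemXc t₀ Φ :=
    ⟨continuousOn_comp_max_zero_add hg.1 hu,
      by simp only [Φ, zero_add, max_eq_right (sub_nonpos.2 hu.2), hg.2]⟩
  have hΦint := (hV Φ hΦ).2 t₀ ⟨ht₀.le, le_rfl⟩
  set F : ℝ → Y := fun σ => S (u - σ) (B (g (max σ 0)))
  have hF : ContinuousOn F (Icc (u - t₀) u) :=
    hSloc.continuousOn_apply hS ht₀ (by fun_prop)
      (fun σ hσ => ⟨by linarith [hσ.2], by linarith [hσ.1]⟩)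
      (B.continuous.comp_continuousOn (continuousOn_comp_max_zero hg.1 ht₀.le hu.2))
  have hFint : IsRiemannIntegral F 0 u (e (V g u)) :=
    ((hV g hg).2 u hu).congr hu.1 fun σ hσ => by simp only [F, max_eq_left hσ.1]
  have hFshift : (fun s => F (s + (u - t₀))) = fun s => S (t₀ - s) (B (Φ s)) := by
    funext s
    simp only [F, Φ, show u - (s + (u - t₀)) = t₀ - s by ring]
  rwa [hFint.eq_of_comp_add hu.1 hu.2 hF
    (fun σ hσ => by simp only [F, max_eq_right hσ.2, hg.2, map_zero]) (hFshift ▸ hΦint)]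

theorem IsVolterraOperator.isRiemannIntegral_sub_sub_smul (hV : IsVolterraOperator S B e t₀ V)
    (hSloc : IsLocallyEquicontinuous S) (hS : ∀ v, ContinuousOn (fun t => S t v) (Ici 0))
    (ht₀ : 0 < t₀) {f f' : ℝ → X} (hf : MemXc t₀ f) (hf' : MemXc t₀ f') {u t : ℝ}
    (hu : u ∈ Icc 0 t₀) (ht : t ∈ Icc 0 t₀) :
    IsRiemannIntegral (fun s => S (t₀ - s) (B (f (max (s + (u - t₀)) 0)
        - f (max (s + (t - t₀)) 0) - (u - t) • f' (max (s + (t - t₀)) 0)))) 0 t₀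
      (e (V f u - V f t - (u - t) • V f' t)) := by
  convert ((hV.isRiemannIntegral_shift hSloc hS ht₀ hf hu).sub
    (hV.isRiemannIntegral_shift hSloc hS ht₀ hf ht)).sub
    ((hV.isRiemannIntegral_shift hSloc hS ht₀ hf' ht).const_smul (u - t)) using 1
  · funext s
    simp only [map_sub, map_smul]
  · simp only [map_sub, map_smul]

theorem IsVolterraOperator.memDD [IsTopologicalAddGroup X] [ContinuousSMul ℝ X]
    (hV : IsVolterraOperator S B e t₀ V) (hSloc : IsLocallyEquicontinuous S)
    (hS : ∀ v, ContinuousOn (fun t => S t v) (Ici 0)) (ht₀ : 0 < t₀) {ι : Type*} [Nonempty ι]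
    {Γ : SeminormFamily ℝ X ι} (hΓ : WithSeminorms Γ)
    (hest : ∀ i, HasIntegralEstimate S B e t₀ (Γ i)) {f f' : ℝ → X} (hff' : MemDD t₀ f f') :
    MemDD t₀ (V f) (V f') := by
  obtain ⟨hf, hfd, hf'c, hf'0⟩ := hff'
  have hf' : MemXc t₀ f' := ⟨hf'c, hf'0⟩
  refine ⟨(hV f hf).1, fun t ht => ?_, (hV f' hf').1⟩
  refine hasDerivWithinAtLC_of_seminorm_le hΓ fun i ε hε => ?_
  obtain ⟨C, hC, q, hq, hCq⟩ := hest i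
  set ε' := ε / (C + 1)
  have hε' : 0 < ε' := by positivity
  obtain ⟨δ, hδ, hδε'⟩ := exists_pos_forall_seminorm_sub_lt hq isCompact_Icc
    (continuousOn_comp_max_zero hf'c ht₀.le le_rfl (a := -t₀)) hε'
  have hdiff : ∀ z ∈ Icc (-t₀) t₀,
      HasDerivWithinAtLC (fun σ => f (max σ 0)) (f' (max z 0)) (Icc (-t₀) t₀) z :=
    fun z hz => hasDerivWithinAtLC_comp_max_zero hfd hf.2 hf'0 hz
  refine ⟨δ, hδ, fun u hu hut => ?_⟩
  have hbound : ∀ s ∈ Icc 0 t₀, q (f (max (s + (u - t₀)) 0) - f (max (s + (t - t₀)) 0)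
      - (u - t) • f' (max (s + (t - t₀)) 0)) ≤ ε' * |u - t| := by
    intro s hs
    have hshift : s + (u - t₀) - (s + (t - t₀)) = u - t := by ring
    have := seminorm_sub_sub_smul_le_of_abs_sub_lt hq hdiff hδε'
      (σ := s + (t - t₀)) (τ := s + (u - t₀)) ⟨by linarith [hs.1, ht.1], by linarith [hs.2, ht.2]⟩
      ⟨by linarith [hs.1, hu.1], by linarith [hs.2, hu.2]⟩ (by rwa [hshift])
    rwa [hshift] at this
  have hΨ := (((continuousOn_comp_max_zero_add hf.1 hu).sub
    (continuousOn_comp_max_zero_add hf.1 ht)).sub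
    ((continuousOn_comp_max_zero_add hf'c ht).const_smul (u - t)))
  calc Γ i (V f u - V f t - (u - t) • V f' t) ≤ C * (ε' * |u - t|) :=
        hCq _ _ _ hΨ (hV.isRiemannIntegral_sub_sub_smul hSloc hS ht₀ hf hf' hu ht) hbound
    _ ≤ ε * |u - t| := by
        rw [← mul_assoc]
        gcongr
        rw [mul_div_assoc', div_le_iff₀ (by linarith)]
        nlinarith

end VolterraOperators

theorem le_biSup_of_bddAbove_s10 {β : Type*} {f : β → ℝ} {s : Set β} (hf : BddAbove (f '' s))
    {c : β} (hc : c ∈ s) : f c ≤ ⨆ x ∈ s, f x :=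
  le_ciSup₂ (f := fun x (_ : x ∈ s) => f x)
    (hf.mono (iUnion_subset fun _ => range_subset_iff.2 fun hx => mem_image_of_mem f hx)) c hc

section DomainOfD

variable {E : Type*} [AddCommGroup E] [Module ℝ E] [TopologicalSpace E] {t₀ : ℝ}

theorem memDD_sum [IsTopologicalAddGroup E] {ι : Type*} {S : Finset ι} {g g' : ι → ℝ → E}
    (h : ∀ n ∈ S, MemDD t₀ (g n) (g' n)) :
    MemDD t₀ (fun τ => ∑ n ∈ S, g n τ) (fun τ => ∑ n ∈ S, g' n τ) :=
  ⟨⟨continuousOn_finsetSum _ fun n hn => (h n hn).1.1,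
      Finset.sum_eq_zero fun n hn => (h n hn).1.2⟩,
    fun t ht => hasDerivWithinAtLC_sum fun n hn => (h n hn).2.1 t ht,
    continuousOn_finsetSum _ fun n hn => (h n hn).2.2.1,
    Finset.sum_eq_zero fun n hn => (h n hn).2.2.2⟩

theorem eventually_forall_seminorm_lt_of_tendsto_biSup {p : Seminorm ℝ E} (hp : Continuous p)
    {F : ℕ → ℝ → E} {a b : ℝ} (hF : ∀ N, ContinuousOn (F N) (Icc a b))
    (h : Tendsto (fun N => ⨆ s ∈ Icc a b, p (F N s)) atTop (𝓝 0)) {ε : ℝ} (hε : 0 < ε) :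
    ∀ᶠ N in atTop, ∀ s ∈ Icc a b, p (F N s) < ε := by
  filter_upwards [h.eventually_lt_const hε] with N hN s hs
  exact (le_biSup_of_bddAbove_s10
    (isCompact_Icc.image_of_continuousOn (hp.comp_continuousOn (hF N))).bddAbove hs).trans_lt hN

theorem tendsto_of_tendsto_biSup [IsTopologicalAddGroup E] {ι : Type*} [Nonempty ι]
    {Γ : SeminormFamily ℝ E ι} (hΓ : WithSeminorms Γ) {F : ℕ → ℝ → E} {G : ℝ → E} {a b : ℝ}
    (hF : ∀ N, ContinuousOn (F N) (Icc a b)) (hG : ContinuousOn G (Icc a b))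
    (h : ∀ i, Tendsto (fun N => ⨆ s ∈ Icc a b, Γ i (F N s - G s)) atTop (𝓝 0))
    {s : ℝ} (hs : s ∈ Icc a b) : Tendsto (fun N => F N s) atTop (𝓝 (G s)) :=
  hΓ.tendsto_nhds _ _ |>.2 fun i _ hε =>
    (eventually_forall_seminorm_lt_of_tendsto_biSup (hΓ.continuous_seminorm i)
      (fun N => (hF N).sub hG) (h i) hε).mono fun _ hN => hN s hs

theorem memDD_of_tendsto_biSup [IsTopologicalAddGroup E] [ContinuousSMul ℝ E]
    {ι : Type*} [Nonempty ι] {Γ : SeminormFamily ℝ E ι} (hΓ : WithSeminorms Γ)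
    {g h : ℕ → ℝ → E} {G H : ℝ → E}
    (hgh : ∀ N, MemDD t₀ (g N) (h N)) (hG : MemXc t₀ G) (hH : MemXc t₀ H)
    (hgG : ∀ i, Tendsto (fun N => ⨆ s ∈ Icc 0 t₀, Γ i (g N s - G s)) atTop (𝓝 0))
    (hhH : ∀ i, Tendsto (fun N => ⨆ s ∈ Icc 0 t₀, Γ i (h N s - H s)) atTop (𝓝 0)) :
    MemDD t₀ G H := by
  have hg N : ContinuousOn (g N) (Icc 0 t₀) := (hgh N).1.1
  have hh N : ContinuousOn (h N) (Icc 0 t₀) := (hgh N).2.2.1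
  refine ⟨hG, fun t ht => hasDerivWithinAtLC_of_seminorm_le hΓ fun i ε hε => ?_, hH⟩
  have hΓi := hΓ.continuous_seminorm i
  obtain ⟨δ, hδ, hδH⟩ := exists_pos_forall_seminorm_sub_lt hΓi isCompact_Icc hH.1 (half_pos hε)
  refine ⟨δ, hδ, fun u hu hut => ?_⟩
  have hlim : Tendsto (fun N => Γ i (g N u - g N t - (u - t) • h N t)) atTop
      (𝓝 (Γ i (G u - G t - (u - t) • H t))) :=
    (hΓi.tendsto _).comp (((tendsto_of_tendsto_biSup hΓ hg hG.1 hgG hu).sub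
      (tendsto_of_tendsto_biSup hΓ hg hG.1 hgG ht)).sub
      ((tendsto_of_tendsto_biSup hΓ hh hH.1 hhH ht).const_smul (u - t)))
  -- the mean value inequality for `g N`, uniformly in large `N`, passes to the limit
  refine le_of_tendsto hlim ?_
  filter_upwards [eventually_forall_seminorm_lt_of_tendsto_biSup hΓi
    (F := fun N s => h N s - H s) (fun N => (hh N).sub hH.1) (hhH i)
    (by positivity : 0 < ε / 4)] with N hN
  have hsub := uIcc_subset_Icc ht hu
  refine seminorm_sub_sub_smul_le_of_hasDerivWithinAtLC hΓi
    (fun z hz => ((hgh N).2.1 z (hsub hz)).mono hsub) fun z hz => ?_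
  calc Γ i (h N z - h N t) = Γ i ((h N z - H z) + (H z - H t) - (h N t - H t)) := by
        congr 1; abel
    _ ≤ Γ i (h N z - H z) + Γ i (H z - H t) + Γ i (h N t - H t) :=
        (map_sub_le_add _ _ _).trans (by gcongr; exact map_add_le_add _ _ _)
    _ ≤ ε := by
        linarith [hN z (hsub hz), hN t ht,
          hδH t ht z (hsub hz) ((Set.abs_sub_left_of_mem_uIcc hz).trans_lt hut)]

end DomainOfD

end DS

theorem RB_RC_commute_with_D_general
    {X Xb : Type*} {ι : Type*} [Nonempty ι]
    [AddCommGroup X] [Module ℝ X] [UniformSpace X] [IsUniformAddGroup X]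
    [ContinuousSMul ℝ X] [T2Space X]
    [AddCommGroup Xb] [Module ℝ Xb] [UniformSpace Xb] [IsUniformAddGroup Xb]
    [ContinuousSMul ℝ Xb] [T2Space Xb] [LocallyConvexSpace ℝ Xb]
    (Γ : SeminormFamily ℝ X ι) (hΓ : WithSeminorms Γ)
    (T : ℝ → X →L[ℝ] X) (hT : IsC0Semigroup T) (hTloc : IsLocallyEquicontinuous T)
    (e : X →L[ℝ] Xb)
    (Tb : ℝ → Xb →L[ℝ] Xb) (hTb : IsC0Semigroup Tb) (hTbloc : IsLocallyEquicontinuous Tb)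
    (B : X →L[ℝ] Xb)
    (t₀ : ℝ) (ht₀ : 0 < t₀)
    -- condition (d): `p(∫₀^{t₀} T̄(t₀ - t) B f(t) dt) ≤ K · sup_{t ∈ [0,t₀]} p(f t)`
    (hd : ∀ i : ι, ∃ K : ℝ, K ∈ Ioo (0 : ℝ) 1 ∧
      ∀ f : ℝ → X, ContinuousOn f (Icc (0 : ℝ) t₀) → ∀ x : X,
        IsRiemannIntegral (fun t : ℝ => Tb (t₀ - t) (B (f t))) 0 t₀ (e x) →
          Γ i x ≤ K * ⨆ t ∈ Icc (0 : ℝ) t₀, Γ i (f t))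
    -- `R` is the generalized resolvent of `A`, `(R f)(t) = ∫₀ᵗ T(t-s) f(s) ds`
    (R : (ℝ → X) → ℝ → X)
    (hR : ∀ f : ℝ → X, MemXc t₀ f → MemXc t₀ (R f) ∧
      ∀ t ∈ Icc (0 : ℝ) t₀,
        IsRiemannIntegral (fun s : ℝ => T (t - s) (f s)) 0 t (R f t))
    -- `RB` is the operator `R̄ℬ : 𝒳 → 𝒳`, `(R̄ℬ f)(t) = ∫₀ᵗ T̄(t-s) B f(s) ds`
    (RB : (ℝ → X) → ℝ → X)
    (hRB : ∀ f : ℝ → X, MemXc t₀ f → MemXc t₀ (RB f) ∧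
      ∀ t ∈ Icc (0 : ℝ) t₀,
        IsRiemannIntegral (fun s : ℝ => Tb (t - s) (B (f s))) 0 t (e (RB f t)))
    -- `RC` is the operator `R_C f = Σ_{n=0}^∞ (R̄ℬ)ⁿ R f` (sum in the topology of `𝒳^∞`)
    (RC : (ℝ → X) → ℝ → X)
    (hRC : ∀ f : ℝ → X, MemXc t₀ f → MemXc t₀ (RC f) ∧
      ∀ i : ι, Tendsto (fun N : ℕ => ⨆ t ∈ Icc (0 : ℝ) t₀,
          Γ i ((∑ n ∈ Finset.range N, (RB^[n] (R f)) t) - RC f t)) atTop (𝓝 0))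
    :
    (∀ f f' : ℝ → X, MemDD t₀ f f' →
      ∃ g' : ℝ → X, MemDD t₀ (RB f) g' ∧ ∀ t ∈ Icc (0 : ℝ) t₀, g' t = RB f' t) ∧
    (∀ f f' : ℝ → X, MemDD t₀ f f' →
      ∃ g' : ℝ → X, MemDD t₀ (RC f) g' ∧ ∀ t ∈ Icc (0 : ℝ) t₀, g' t = RC f' t) := by
  have : LocallyConvexSpace ℝ X := hΓ.toLocallyConvexSpace
  have hRV : IsVolterraOperator T (.id ℝ X) (.id ℝ X) t₀ R := hR
  have hRBV : IsVolterraOperator Tb B e t₀ RB := hRB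
  have hRD : ∀ f f', MemDD t₀ f f' → MemDD t₀ (R f) (R f') := fun f f' hff' =>
    hRV.memDD hTloc hT.2.2 ht₀ hΓ
      (fun i => hTloc.hasIntegralEstimate ht₀ (hΓ.continuous_seminorm i)) hff'
  have hRBD : ∀ f f', MemDD t₀ f f' → MemDD t₀ (RB f) (RB f') := fun f f' hff' =>
    hRBV.memDD hTbloc hTb.2.2 ht₀ hΓ (fun i =>
      let ⟨_, hK, hKi⟩ := hd i
      hasIntegralEstimate_of_le_mul_biSup ht₀.le (hΓ.continuous_seminorm i) hK.1.le hKi) hff'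
  have hiter : ∀ n f f', MemDD t₀ f f' → MemDD t₀ (RB^[n] (R f)) (RB^[n] (R f')) := by
    intro n
    induction n with
    | zero => exact hRD
    | succ n ih =>
      intro f f' hff'
      simpa only [Function.iterate_succ_apply'] using hRBD _ _ (ih f f' hff')
  refine ⟨fun f f' hff' => ⟨RB f', hRBD f f' hff', fun _ _ => rfl⟩,
    fun f f' hff' => ⟨RC f', ?_, fun _ _ => rfl⟩⟩
  have hf' : MemXc t₀ f' := hff'.2.2
  exact memDD_of_tendsto_biSup hΓ (fun N => memDD_sum fun n _ => hiter n f f' hff')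
    (hRC f hff'.1).1 (hRC f' hf').1 (hRC f hff'.1).2 (hRC f' hf').2

/-- Under the standing assumptions of the Desch–Schappacher theorem: for every
`f ∈ D(𝒟)` one has `R̄ℬ f ∈ D(𝒟)` with `𝒟(R̄ℬ f) = R̄ℬ(𝒟 f)`, and consequently
`R_C f ∈ D(𝒟)` with `𝒟(R_C f) = R_C(𝒟 f)` — condition (ii) of the generalized resolvent
for the perturbed operator. -/
theorem RB_RC_commute_with_D
    {X Xb : Type*} {ι : Type*} [Nonempty ι]
    [AddCommGroup X] [Module ℝ X] [UniformSpace X] [IsUniformAddGroup X]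
    [ContinuousSMul ℝ X] [T2Space X]
    [AddCommGroup Xb] [Module ℝ Xb] [UniformSpace Xb] [IsUniformAddGroup Xb]
    [ContinuousSMul ℝ Xb] [T2Space Xb] [LocallyConvexSpace ℝ Xb]
    (hXsc : SeqComplete X) (hXbsc : SeqComplete Xb)
    (Γ : SeminormFamily ℝ X ι) (hΓ : WithSeminorms Γ)
    (T : ℝ → X →L[ℝ] X) (hT : IsC0Semigroup T) (hTloc : IsLocallyEquicontinuous T)
    (domA : Set X) (A : X → X) (hA : IsGenerator T domA A)
    (e : X →L[ℝ] Xb) (he : Function.Injective e) (hedense : DenseRange e)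
    (Tb : ℝ → Xb →L[ℝ] Xb) (hTb : IsC0Semigroup Tb) (hTbloc : IsLocallyEquicontinuous Tb)
    (Ab : Xb → Xb) (hAb : IsGenerator Tb (Set.range e) Ab)
    (hTbe : ∀ t : ℝ, 0 ≤ t → ∀ x : X, Tb t (e x) = e (T t x))
    (B : X →L[ℝ] Xb)
    (t₀ : ℝ) (ht₀ : 0 < t₀)
    -- condition (c): the integral `∫₀^{t₀} T̄(t₀ - t) B f(t) dt` belongs to `X`
    (hc : ∀ f : ℝ → X, ContinuousOn f (Icc (0 : ℝ) t₀) →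
      ∃ x : X, IsRiemannIntegral (fun t : ℝ => Tb (t₀ - t) (B (f t))) 0 t₀ (e x))
    -- condition (d): `p(∫₀^{t₀} T̄(t₀ - t) B f(t) dt) ≤ K · sup_{t ∈ [0,t₀]} p(f t)`
    (hd : ∀ i : ι, ∃ K : ℝ, K ∈ Ioo (0 : ℝ) 1 ∧
      ∀ f : ℝ → X, ContinuousOn f (Icc (0 : ℝ) t₀) → ∀ x : X,
        IsRiemannIntegral (fun t : ℝ => Tb (t₀ - t) (B (f t))) 0 t₀ (e x) →
          Γ i x ≤ K * ⨆ t ∈ Icc (0 : ℝ) t₀, Γ i (f t))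
    -- `R` is the generalized resolvent of `A`, `(R f)(t) = ∫₀ᵗ T(t-s) f(s) ds`
    (R : (ℝ → X) → ℝ → X)
    (hR : ∀ f : ℝ → X, MemXc t₀ f → MemXc t₀ (R f) ∧
      ∀ t ∈ Icc (0 : ℝ) t₀,
        IsRiemannIntegral (fun s : ℝ => T (t - s) (f s)) 0 t (R f t))
    -- `RB` is the operator `R̄ℬ : 𝒳 → 𝒳`, `(R̄ℬ f)(t) = ∫₀ᵗ T̄(t-s) B f(s) ds`
    (RB : (ℝ → X) → ℝ → X)
    (hRB : ∀ f : ℝ → X, MemXc t₀ f → MemXc t₀ (RB f) ∧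
      ∀ t ∈ Icc (0 : ℝ) t₀,
        IsRiemannIntegral (fun s : ℝ => Tb (t - s) (B (f s))) 0 t (e (RB f t)))
    -- `RC` is the operator `R_C f = Σ_{n=0}^∞ (R̄ℬ)ⁿ R f` (sum in the topology of `𝒳^∞`)
    (RC : (ℝ → X) → ℝ → X)
    (hRC : ∀ f : ℝ → X, MemXc t₀ f → MemXc t₀ (RC f) ∧
      ∀ i : ι, Tendsto (fun N : ℕ => ⨆ t ∈ Icc (0 : ℝ) t₀,
          Γ i ((∑ n ∈ Finset.range N, (RB^[n] (R f)) t) - RC f t)) atTop (𝓝 0))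
    :
    (∀ f f' : ℝ → X, MemDD t₀ f f' →
      ∃ g' : ℝ → X, MemDD t₀ (RB f) g' ∧ ∀ t ∈ Icc (0 : ℝ) t₀, g' t = RB f' t) ∧
    (∀ f f' : ℝ → X, MemDD t₀ f f' →
      ∃ g' : ℝ → X, MemDD t₀ (RC f) g' ∧ ∀ t ∈ Icc (0 : ℝ) t₀, g' t = RC f' t) :=
  RB_RC_commute_with_D_general Γ hΓ T hT hTloc e Tb hTb hTbloc B t₀ ht₀ hd R hR RB hRB RC hRC
end
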